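/- Given $K_0 \in S^n$, a penalty matrix $H$ with $H_{ij} = h_i h_j$, $h_i > 0$, $W = \mathrm{diag}(h)$, and $\alpha \in \mathbb{R}^n$, the unique minimizer over $K \succeq 0$ of $\alpha^T e - \tfrac12 \mathrm{Tr}(K(Y\alpha)(Y\alpha)^T) + \sum_{i,j} H_{ij}(K_{ij} - K_{0,ij})^2$ is $K^* = W^{-1/2}\left( \left( W^{1/2}\left(K_0 + \tfrac14 (W^{-1}Y\alpha)(W^{-1}Y\alpha)^T\right) W^{1/2} \right)_+ \right) W^{-1/2}$. -/

import Mathlib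

/-!
With `D = W^{1/2} = diag(√h)` the entries of `D K D` are `√(hᵢhⱼ) Kᵢⱼ`, so the rank-one weights turn
the penalty into a plain Frobenius distance: completing the square gives
`obj K = const + ‖D K D - D (K₀ + ¼ v vᵀ) D‖²_F` with `v = W⁻¹ Y α`. Since `K ↦ D K D` is a
bijection of the PSD cone, minimising `obj` over `K ⪰ 0` is projecting `D (K₀ + ¼ v vᵀ) D` onto the
PSD cone, and that projection is unique because the cone is convex and the squared Frobenius norm
satisfies the parallelogram law.
-/

open Matrix

noncomputable def frob2 {n : ℕ} (M : Matrix (Fin n) (Fin n) ℝ) : ℝ :=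
  Matrix.trace (Mᵀ * M)

def IsPSDProj {n : ℕ} (M P : Matrix (Fin n) (Fin n) ℝ) : Prop :=
  P.PosSemidef ∧ ∀ K : Matrix (Fin n) (Fin n) ℝ, K.PosSemidef →
    frob2 (P - M) ≤ frob2 (K - M)

section Frobenius

variable {n : ℕ}

lemma frob2_eq_sum (X : Matrix (Fin n) (Fin n) ℝ) : frob2 X = ∑ i, ∑ j, X i j ^ 2 := by
  simp only [frob2, trace, diag, mul_apply, transpose_apply, sq]
  exact Finset.sum_comm

lemma frob2_nonneg (X : Matrix (Fin n) (Fin n) ℝ) : 0 ≤ frob2 X := by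
  rw [frob2_eq_sum]
  positivity

lemma frob2_eq_zero_iff {X : Matrix (Fin n) (Fin n) ℝ} : frob2 X = 0 ↔ X = 0 := by
  rw [frob2, ← conjTranspose_eq_transpose_of_trivial]
  exact trace_conjTranspose_mul_self_eq_zero_iff

lemma frob2_midpoint_sub (P Q M : Matrix (Fin n) (Fin n) ℝ) :
    frob2 ((1 / 2 : ℝ) • (P + Q) - M) =
      frob2 (P - M) / 2 + frob2 (Q - M) / 2 - frob2 (P - Q) / 4 := by
  simp only [frob2_eq_sum, Finset.sum_div, ← Finset.sum_add_distrib, ← Finset.sum_sub_distrib]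
  refine Finset.sum_congr rfl fun i _ => Finset.sum_congr rfl fun j _ => ?_
  simp only [Matrix.sub_apply, Matrix.add_apply, Matrix.smul_apply, smul_eq_mul]
  ring

lemma IsPSDProj.eq_of_frob2_eq {M P K : Matrix (Fin n) (Fin n) ℝ} (hP : IsPSDProj M P)
    (hK : K.PosSemidef) (hKP : frob2 (K - M) = frob2 (P - M)) : K = P := by
  have hmid : ((1 / 2 : ℝ) • (P + K)).PosSemidef := (hP.1.add hK).smul (by norm_num)
  have hle := hP.2 _ hmid
  rw [frob2_midpoint_sub, hKP] at hle
  have hPK : frob2 (P - K) = 0 := le_antisymm (by linarith) (frob2_nonneg _)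
  exact (sub_eq_zero.mp (frob2_eq_zero_iff.mp hPK)).symm

end Frobenius

section Diagonal

variable {ι R : Type*} [Fintype ι] [DecidableEq ι]

lemma diagonal_mul_mul_diagonal_apply [CommSemiring R] (s : ι → R) (A : Matrix ι ι R) (i j : ι) :
    (diagonal s * A * diagonal s) i j = s i * s j * A i j := by
  rw [mul_diagonal, diagonal_mul]
  ring

lemma diagonal_mul_mul_diagonal_cancel [CommRing R] {s t : ι → R} (hst : ∀ i, s i * t i = 1)
    (A : Matrix ι ι R) : diagonal s * (diagonal t * A * diagonal t) * diagonal s = A := by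
  ext i j
  simp only [diagonal_mul_mul_diagonal_apply]
  linear_combination (t j * s j * A i j) * hst i + A i j * hst j

lemma Matrix.PosSemidef.diagonal_mul_mul_diagonal {A : Matrix ι ι ℝ} (hA : A.PosSemidef)
    (s : ι → ℝ) : (diagonal s * A * diagonal s).PosSemidef := by
  simpa using hA.mul_mul_conjTranspose_same (diagonal s)

end Diagonal

section CompletingTheSquare

variable {n : ℕ}

lemma frob2_diagonal_sqrt_mul_mul_diagonal_sqrt {h : Fin n → ℝ} (hh : ∀ i, 0 ≤ h i)
    (A : Matrix (Fin n) (Fin n) ℝ) :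
    frob2 (diagonal (fun i => √(h i)) * A * diagonal (fun i => √(h i))) =
      ∑ i, ∑ j, h i * h j * A i j ^ 2 := by
  simp only [frob2_eq_sum, diagonal_mul_mul_diagonal_apply, mul_pow, Real.sq_sqrt (hh _)]

theorem weighted_sq_sub_half_trace_eq {h : Fin n → ℝ} (hh : ∀ i, 0 ≤ h i) (v : Fin n → ℝ)
    (K K₀ : Matrix (Fin n) (Fin n) ℝ) :
    ∑ i, ∑ j, h i * h j * (K i j - K₀ i j) ^ 2 - 1 / 2 * trace (K * vecMulVec (h * v) (h * v)) =
      frob2 (diagonal (fun i => √(h i)) * K * diagonal (fun i => √(h i)) -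
        diagonal (fun i => √(h i)) * (K₀ + (1 / 4 : ℝ) • vecMulVec v v) *
          diagonal (fun i => √(h i))) -
      ∑ i, ∑ j, h i * h j * (v i * v j / 4 * (v i * v j / 4 + 2 * K₀ i j)) := by
  rw [← Matrix.sub_mul, ← Matrix.mul_sub, frob2_diagonal_sqrt_mul_mul_diagonal_sqrt hh]
  simp only [trace, diag, mul_apply, vecMulVec_apply, Pi.mul_apply, Finset.mul_sum,
    ← Finset.sum_sub_distrib]
  refine Finset.sum_congr rfl fun i _ => Finset.sum_congr rfl fun j _ => ?_
  simp only [Matrix.sub_apply, Matrix.add_apply, Matrix.smul_apply, vecMulVec_apply, smul_eq_mul]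
  ring

end CompletingTheSquare

theorem componentwise_penalty_solution_general {n : ℕ}
    (K₀ : Matrix (Fin n) (Fin n) ℝ)
    (h : Fin n → ℝ) (hh : ∀ i, 0 < h i)
    (α y : Fin n → ℝ)
    (v : Fin n → ℝ) (hv : v = fun i => (h i)⁻¹ * (y i * α i))
    (Whalf Winvhalf : Matrix (Fin n) (Fin n) ℝ)
    (hWhalf : Whalf = Matrix.diagonal (fun i => Real.sqrt (h i)))
    (hWinvhalf : Winvhalf = Matrix.diagonal (fun i => (Real.sqrt (h i))⁻¹))
    (P : Matrix (Fin n) (Fin n) ℝ)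
    (hP : IsPSDProj (Whalf * (K₀ + (1/4 : ℝ) • Matrix.vecMulVec v v) * Whalf) P)
    (Kstar : Matrix (Fin n) (Fin n) ℝ)
    (hKstar : Kstar = Winvhalf * P * Winvhalf)
    (obj : Matrix (Fin n) (Fin n) ℝ → ℝ)
    (hobj : ∀ K, obj K = (∑ i, α i)
        - (1/2) * Matrix.trace (K * Matrix.vecMulVec ((Matrix.diagonal y) *ᵥ α)
            ((Matrix.diagonal y) *ᵥ α))
        + ∑ i, ∑ j, h i * h j * (K i j - K₀ i j)^2) :
    Kstar.PosSemidef ∧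
    (∀ K : Matrix (Fin n) (Fin n) ℝ, K.PosSemidef → obj Kstar ≤ obj K) ∧
    (∀ K : Matrix (Fin n) (Fin n) ℝ, K.PosSemidef → obj K = obj Kstar → K = Kstar) := by
  subst hWhalf hWinvhalf hKstar
  have hYα : diagonal y *ᵥ α = h * v := by
    ext i
    simp [hv, mulVec_diagonal, (hh i).ne']
  have hobj_eq : ∀ K, obj K = (∑ i, α i) - ∑ i, ∑ j,
      h i * h j * (v i * v j / 4 * (v i * v j / 4 + 2 * K₀ i j)) +
      frob2 (diagonal (fun i => √(h i)) * K * diagonal (fun i => √(h i)) -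
        diagonal (fun i => √(h i)) * (K₀ + (1 / 4 : ℝ) • vecMulVec v v) *
          diagonal (fun i => √(h i))) := fun K => by
    rw [hobj, hYα]
    linarith [weighted_sq_sub_half_trace_eq (fun i => (hh i).le) v K K₀]
  have hsqrt_mul_inv : ∀ i, √(h i) * (√(h i))⁻¹ = 1 := fun i =>
    mul_inv_cancel₀ (Real.sqrt_pos.mpr (hh i)).ne'
  have hinv_mul_sqrt : ∀ i, (√(h i))⁻¹ * √(h i) = 1 := fun i => by rw [mul_comm, hsqrt_mul_inv]
  refine ⟨hP.1.diagonal_mul_mul_diagonal _, fun K hK => ?_, fun K hK hKeq => ?_⟩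
  · rw [hobj_eq, hobj_eq, diagonal_mul_mul_diagonal_cancel hsqrt_mul_inv]
    linarith [hP.2 _ (hK.diagonal_mul_mul_diagonal fun i => √(h i))]
  · rw [hobj_eq, hobj_eq, diagonal_mul_mul_diagonal_cancel hsqrt_mul_inv] at hKeq
    rw [← hP.eq_of_frob2_eq (hK.diagonal_mul_mul_diagonal fun i => √(h i)) (by linarith),
      diagonal_mul_mul_diagonal_cancel hinv_mul_sqrt]

/-- componentwise-penalized indefinite SVM inner problem with
rank-one penalty `H_{ij} = hᵢhⱼ`: the unique PSD minimizer of
`αᵀe - ½Tr(K(Yα)(Yα)ᵀ) + ∑_{i,j} H_{ij}(K_{ij}-K₀_{ij})²` is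
`W^{-1/2}((W^{1/2}(K₀ + ¼(W⁻¹Yα)(W⁻¹Yα)ᵀ)W^{1/2})₊)W^{-1/2}`. -/
theorem componentwise_penalty_solution {n : ℕ}
    (K₀ : Matrix (Fin n) (Fin n) ℝ) (hK₀ : K₀.IsSymm)
    (h : Fin n → ℝ) (hh : ∀ i, 0 < h i)
    (α y : Fin n → ℝ)
    (v : Fin n → ℝ) (hv : v = fun i => (h i)⁻¹ * (y i * α i))
    (Whalf Winvhalf : Matrix (Fin n) (Fin n) ℝ)
    (hWhalf : Whalf = Matrix.diagonal (fun i => Real.sqrt (h i)))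
    (hWinvhalf : Winvhalf = Matrix.diagonal (fun i => (Real.sqrt (h i))⁻¹))
    (P : Matrix (Fin n) (Fin n) ℝ)
    (hP : IsPSDProj (Whalf * (K₀ + (1/4 : ℝ) • Matrix.vecMulVec v v) * Whalf) P)
    (Kstar : Matrix (Fin n) (Fin n) ℝ)
    (hKstar : Kstar = Winvhalf * P * Winvhalf)
    (obj : Matrix (Fin n) (Fin n) ℝ → ℝ)
    (hobj : ∀ K, obj K = (∑ i, α i)
        - (1/2) * Matrix.trace (K * Matrix.vecMulVec ((Matrix.diagonal y) *ᵥ α)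
            ((Matrix.diagonal y) *ᵥ α))
        + ∑ i, ∑ j, h i * h j * (K i j - K₀ i j)^2) :
    Kstar.PosSemidef ∧
    (∀ K : Matrix (Fin n) (Fin n) ℝ, K.PosSemidef → obj Kstar ≤ obj K) ∧
    (∀ K : Matrix (Fin n) (Fin n) ℝ, K.PosSemidef → obj K = obj Kstar → K = Kstar) :=
  componentwise_penalty_solution_general K₀ h hh α y v hv Whalf Winvhalf hWhalf hWinvhalf P hP Kstar
    hKstar obj hobj
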